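/- arXiv:math/0005052 — 3 statements merged into one kernel-verified Lean document; each statement's English description precedes it below -/
import Mathlib

section
/- Let w ∈ S_n be 321-avoiding. Then in any reduced word for w, any two occurrences of the same generator s_i are separated by at least one occurrence of s_{i-1} and at least one occurrence of s_{i+1}. -/
open Polynomial

/-- The simple transposition `s_i = (i, i+1)` (1-based) in `S_n`, acting on `Fin n`
(0-based positions `i-1` and `i`); equals `1` if `i` is out of range. -/
def gen (n : ℕ) (i : ℕ) : Equiv.Perm (Fin n) :=
  if h : 1 ≤ i ∧ i < n then Equiv.swap ⟨i - 1, by omega⟩ ⟨i, h.2⟩ else 1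

/-- Product of the word `l` of generator indices. -/
def wordProd (n : ℕ) (l : List ℕ) : Equiv.Perm (Fin n) :=
  (l.map (gen n)).prod

/-- Coxeter length of `w ∈ S_n`. -/
noncomputable def len (n : ℕ) (w : Equiv.Perm (Fin n)) : ℕ :=
  sInf {r | ∃ l : List ℕ, (∀ i ∈ l, 1 ≤ i ∧ i < n) ∧ wordProd n l = w ∧ l.length = r}

/-- `l` is a reduced word for `w`. -/
def IsReducedWord (n : ℕ) (w : Equiv.Perm (Fin n)) (l : List ℕ) : Prop :=
  (∀ i ∈ l, 1 ≤ i ∧ i < n) ∧ wordProd n l = w ∧ l.length = len n w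

/-- Bruhat-Chevalley order: `x ≤ w` iff every reduced word for `w` contains a
subword whose product is `x`. -/
def Bruhat (n : ℕ) (x w : Equiv.Perm (Fin n)) : Prop :=
  ∀ l, IsReducedWord n w l → ∃ t, t.Sublist l ∧ wordProd n t = x

/-- `w` is 321-avoiding: no `i < j < k` with `w i > w j > w k`. -/
def Avoids321 (n : ℕ) (w : Equiv.Perm (Fin n)) : Prop :=
  ¬ ∃ i j k : Fin n, i < j ∧ j < k ∧ w j < w i ∧ w k < w j

/-- Product of the subword of `l` selected by the mask `S` (set of selected positions). -/
def maskProd (n : ℕ) (l : List ℕ) (S : Finset ℕ) : Equiv.Perm (Fin n) :=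
  wordProd n (((List.range l.length).filter (fun j => decide (j ∈ S))).map (fun j => l.getD j 0))

/-- Position `j` of the word `l` is a defect of the mask `S`. -/
noncomputable def IsDefect (n : ℕ) (l : List ℕ) (S : Finset ℕ) (j : ℕ) : Prop :=
  len n (maskProd n (l.take j) S * gen n (l.getD j 0)) < len n (maskProd n (l.take j) S)

/-- The defect set `D(σ)` of the mask `S` on the word `l`. -/
noncomputable def defectSet (n : ℕ) (l : List ℕ) (S : Finset ℕ) : Finset ℕ :=
  (Finset.range l.length).filter (fun j =>
    len n (maskProd n (l.take j) S * gen n (l.getD j 0)) < len n (maskProd n (l.take j) S))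

/-- Deodhar's defect generating polynomial `P_x(a) = Σ_{σ : π(w^σ) = x} q^{|D(σ)|}`. -/
noncomputable def defPoly (n : ℕ) (l : List ℕ) (x : Equiv.Perm (Fin n)) : Polynomial ℤ :=
  ∑ S ∈ (Finset.range l.length).powerset,
    if maskProd n l S = x then (X : Polynomial ℤ) ^ (defectSet n l S).card else 0

/-!
Read a reduced word as a sorting network acting on the values `1, …, n`: each letter exchanges
the two values currently in the positions it swaps. In a reduced word no two values are exchanged
twice (otherwise deleting both letters leaves the product unchanged), so a pair that is exchanged
at all ends up inverted in `w`.

Let `s_i` occur at `a < b`, and let `q` be a position moved by `s_i` but by no letter in between.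
The value `x` put at `q` by letter `a` stays there until letter `b`; letter `a` exchanges it with
some `u` and letter `b` with some `v ≠ u`. Between the two letters, `u` and `v` occupy in turn the
other position moved by `s_i` without crossing the wall next to it, so they are exchanged too.
Hence `x`, `u`, `v` are pairwise inverted: a 321 pattern.
-/

open Equiv

section Generators

variable {n : ℕ}

lemma gen_mul_self (n j : ℕ) : gen n j * gen n j = 1 := by
  unfold gen
  split_ifs
  · exact swap_mul_self _ _
  · exact one_mul 1

lemma gen_inv (n j : ℕ) : (gen n j)⁻¹ = gen n j :=
  inv_eq_of_mul_eq_one_right (gen_mul_self n j)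

lemma gen_apply_val {j : ℕ} (hj : 1 ≤ j ∧ j < n) (p : Fin n) :
    (gen n j p).val = if p.val + 1 = j then j else if p.val = j then j - 1 else p.val := by
  rw [gen, dif_pos hj, swap_apply_def]
  split_ifs <;> simp only [Fin.ext_iff] at * <;> omega

lemma gen_apply_ne_self_iff {j : ℕ} {p : Fin n} :
    gen n j p ≠ p ↔ 1 ≤ j ∧ j < n ∧ (p.val + 1 = j ∨ p.val = j) := by
  by_cases hj : 1 ≤ j ∧ j < n
  · rw [Ne, Fin.ext_iff, gen_apply_val hj]
    split_ifs <;> omega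
  · simp only [gen, dif_neg hj, Perm.coe_one, id_eq, ne_eq, not_true_eq_false, false_iff]
    omega

lemma gen_eq_swap_of_apply_ne {j : ℕ} {p : Fin n} (h : gen n j p ≠ p) :
    gen n j = swap p (gen n j p) := by
  unfold gen at h ⊢
  split_ifs at h ⊢
  · obtain ⟨-, rfl | rfl⟩ := swap_apply_ne_self_iff.mp h
    · rw [swap_apply_left]
    · rw [swap_apply_right, swap_comm]
  · exact absurd rfl h

lemma gen_apply_lt_gen_apply_iff {j : ℕ} {p q : Fin n} (hpq : gen n j p ≠ q)
    (hqp : gen n j q ≠ p) : gen n j p < gen n j q ↔ p < q := by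
  by_cases hj : 1 ≤ j ∧ j < n
  · rw [Ne, Fin.ext_iff, gen_apply_val hj] at hpq hqp
    rw [Fin.lt_def, Fin.lt_def, gen_apply_val hj, gen_apply_val hj]
    split_ifs at * <;> omega
  · simp [gen, hj]

lemma gen_apply_val_lt_iff {i j : ℕ} (hji : j ≠ i) (p : Fin n) :
    (gen n j p).val < i ↔ p.val < i := by
  by_cases hj : 1 ≤ j ∧ j < n
  · rw [gen_apply_val hj]
    split_ifs <;> omega
  · simp [gen, hj]

end Generators

section Words

variable {n : ℕ}

lemma wordProd_append (l l' : List ℕ) : wordProd n (l ++ l') = wordProd n l * wordProd n l' := by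
  simp [wordProd]

lemma len_le_length {l : List ℕ} (hl : ∀ i ∈ l, 1 ≤ i ∧ i < n) :
    len n (wordProd n l) ≤ l.length :=
  Nat.sInf_le ⟨l, hl, rfl, rfl⟩

/-- `prefixProd n l t p` is the value in position `p`, and `(prefixProd n l t)⁻¹ y` the position of
the value `y`, once the first `t` letters of `l` have acted on positions. -/
def prefixProd (n : ℕ) (l : List ℕ) (t : ℕ) : Perm (Fin n) :=
  wordProd n (l.take t)

variable {l : List ℕ}

lemma prefixProd_zero : prefixProd n l 0 = 1 := by
  simp [prefixProd, wordProd]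

lemma prefixProd_length : prefixProd n l l.length = wordProd n l := by
  simp [prefixProd]

lemma prefixProd_succ (t : ℕ) :
    prefixProd n l (t + 1) = prefixProd n l t * gen n (l.getD t 0) := by
  rw [prefixProd, List.take_add_one, wordProd_append, prefixProd, List.getD_eq_getElem?_getD]
  cases l[t]? with
  | none => simp [wordProd, gen]
  | some j => simp [wordProd]

lemma prefixProd_succ_apply (t : ℕ) (p : Fin n) :
    prefixProd n l (t + 1) p = prefixProd n l t (gen n (l.getD t 0) p) := by
  rw [prefixProd_succ, Perm.mul_apply]

lemma prefixProd_succ_inv (t : ℕ) :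
    (prefixProd n l (t + 1))⁻¹ = gen n (l.getD t 0) * (prefixProd n l t)⁻¹ := by
  rw [prefixProd_succ, mul_inv_rev, gen_inv]

lemma prefixProd_apply_eq_of_forall_gen_apply_eq {t₁ t₂ : ℕ} {p : Fin n} (h : t₁ ≤ t₂)
    (hfix : ∀ t, t₁ ≤ t → t < t₂ → gen n (l.getD t 0) p = p) :
    prefixProd n l t₂ p = prefixProd n l t₁ p := by
  induction t₂, h using Nat.le_induction with
  | base => rfl
  | succ t ht ih =>
    rw [prefixProd_succ_apply, hfix t ht (by omega), ih fun s hs hs' => hfix s hs (by omega)]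

lemma inv_apply_val_lt_iff_of_forall_ne {t₁ t₂ i : ℕ} (h : t₁ ≤ t₂)
    (hne : ∀ t, t₁ ≤ t → t < t₂ → l.getD t 0 ≠ i) (z : Fin n) :
    ((prefixProd n l t₂)⁻¹ z).val < i ↔ ((prefixProd n l t₁)⁻¹ z).val < i := by
  induction t₂, h using Nat.le_induction with
  | base => rfl
  | succ t ht ih =>
    rw [prefixProd_succ_inv, Perm.mul_apply, gen_apply_val_lt_iff (hne t ht (by omega)),
      ih fun s hs hs' => hne s hs (by omega)]

end Words

section Transposes

variable {n : ℕ} {l : List ℕ} {t : ℕ} {y z : Fin n}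

/-- Letter `t` of `l` exchanges the positions of the values `y` and `z`. -/
def Transposes (n : ℕ) (l : List ℕ) (t : ℕ) (y z : Fin n) : Prop :=
  prefixProd n l (t + 1) = swap y z * prefixProd n l t

lemma transposes_of_gen_apply_ne {p : Fin n} (h : gen n (l.getD t 0) p ≠ p) :
    Transposes n l t (prefixProd n l t p) (prefixProd n l t (gen n (l.getD t 0) p)) := by
  rw [Transposes, prefixProd_succ]
  nth_rw 1 [gen_eq_swap_of_apply_ne h]
  rw [mul_swap_eq_swap_mul]

lemma Transposes.symm (h : Transposes n l t y z) : Transposes n l t z y := by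
  rwa [Transposes, swap_comm]

lemma Transposes.inv_apply_left (h : Transposes n l t y z) :
    (prefixProd n l (t + 1))⁻¹ y = (prefixProd n l t)⁻¹ z := by
  rw [h, mul_inv_rev, swap_inv, Perm.mul_apply, swap_apply_left]

lemma inv_apply_lt_inv_apply_succ_iff (hyz : y ≠ z) (h : ¬ Transposes n l t y z) :
    (prefixProd n l (t + 1))⁻¹ y < (prefixProd n l (t + 1))⁻¹ z ↔
      (prefixProd n l t)⁻¹ y < (prefixProd n l t)⁻¹ z := by
  have hmoved : ∀ {y z : Fin n}, y ≠ z →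
      gen n (l.getD t 0) ((prefixProd n l t)⁻¹ y) = (prefixProd n l t)⁻¹ z →
      Transposes n l t y z := fun {y z} hyz hyz' => by
    have hne := hyz' ▸ (prefixProd n l t)⁻¹.injective.ne hyz.symm
    have h := transposes_of_gen_apply_ne hne
    rw [hyz'] at h
    simpa only [Perm.coe_inv, apply_symm_apply] using h
  rw [prefixProd_succ_inv, Perm.mul_apply, Perm.mul_apply]
  exact gen_apply_lt_gen_apply_iff (fun h' => h (hmoved hyz h'))
    (fun h' => h (hmoved hyz.symm h').symm)

lemma inv_apply_lt_inv_apply_iff_of_forall_not_transposes {t₁ t₂ : ℕ} (hyz : y ≠ z)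
    (h : t₁ ≤ t₂) (hnot : ∀ t, t₁ ≤ t → t < t₂ → ¬ Transposes n l t y z) :
    (prefixProd n l t₂)⁻¹ y < (prefixProd n l t₂)⁻¹ z ↔
      (prefixProd n l t₁)⁻¹ y < (prefixProd n l t₁)⁻¹ z := by
  induction t₂, h using Nat.le_induction with
  | base => rfl
  | succ t ht ih =>
    rw [inv_apply_lt_inv_apply_succ_iff hyz (hnot t ht (by omega)),
      ih fun s hs hs' => hnot s hs (by omega)]

def Exchanged (n : ℕ) (l : List ℕ) (y z : Fin n) : Prop :=
  ∃ t < l.length, Transposes n l t y z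

instance : Std.Symm (Exchanged n l) :=
  ⟨fun _ _ ⟨t, htl, ht⟩ => ⟨t, htl, ht.symm⟩⟩

/-- If no letter `s_i` occurs between `t₁` and `t₂`, nothing crosses the wall between positions
`i - 1` and `i`; so two values taking turns at a position next to that wall change order. -/
lemma exchanged_of_inv_apply_eq {t₁ t₂ i : ℕ} (h : t₁ ≤ t₂) (ht₂ : t₂ ≤ l.length) (hyz : y ≠ z)
    (hne : ∀ t, t₁ ≤ t → t < t₂ → l.getD t 0 ≠ i)
    (heq : (prefixProd n l t₁)⁻¹ y = (prefixProd n l t₂)⁻¹ z)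
    (hwall : ((prefixProd n l t₁)⁻¹ y).val + 1 = i ∨ ((prefixProd n l t₁)⁻¹ y).val = i) :
    Exchanged n l y z := by
  by_contra hnot
  have horder := inv_apply_lt_inv_apply_iff_of_forall_not_transposes hyz h
    fun t _ ht ht' => hnot ⟨t, by omega, ht'⟩
  have hy := (prefixProd n l t₂)⁻¹.injective.ne hyz
  have hz := (prefixProd n l t₁)⁻¹.injective.ne hyz
  have hsy := inv_apply_val_lt_iff_of_forall_ne h hne y
  have hsz := inv_apply_val_lt_iff_of_forall_ne h hne z
  rw [← heq] at horder hy hsz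
  simp only [Fin.lt_def, ne_eq, Fin.ext_iff] at horder hy hz hsy hsz
  omega

end Transposes

section Reduced

variable {n : ℕ} {w : Perm (Fin n)} {l : List ℕ} {y z : Fin n}

lemma IsReducedWord.not_transposes_of_lt {t t' : ℕ} (hl : IsReducedWord n w l)
    (ht : Transposes n l t y z) (ht' : Transposes n l t' y z) (htt' : t < t')
    (ht'l : t' < l.length) : False := by
  obtain ⟨hval, rfl, hlen⟩ := hl
  set mid := (l.drop (t + 1)).take (t' - (t + 1))
  set l' := l.take t ++ mid ++ l.drop (t' + 1)
  have hmid : prefixProd n l t' = prefixProd n l (t + 1) * wordProd n mid := by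
    rw [prefixProd, prefixProd, ← wordProd_append, ← List.take_add, Nat.add_sub_cancel' htt']
  have hprod : wordProd n l' = wordProd n l := by
    calc wordProd n l' = prefixProd n l t * wordProd n mid * wordProd n (l.drop (t' + 1)) := by
          rw [wordProd_append, wordProd_append, prefixProd]
      _ = prefixProd n l (t' + 1) * wordProd n (l.drop (t' + 1)) := by
          rw [ht', hmid, ht]
          simp only [mul_assoc, swap_mul_self_mul]
      _ = wordProd n l := by
          rw [prefixProd, ← wordProd_append, List.take_append_drop]
  have hval' : ∀ i ∈ l', 1 ≤ i ∧ i < n := by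
    intro i hi
    simp only [l', mid, List.mem_append] at hi
    rcases hi with (hi | hi) | hi
    · exact hval i (List.mem_of_mem_take hi)
    · exact hval i (List.mem_of_mem_drop (List.mem_of_mem_take hi))
    · exact hval i (List.mem_of_mem_drop hi)
  have hshort := len_le_length hval'
  rw [hprod, ← hlen] at hshort
  simp only [l', mid, List.length_append, List.length_take, List.length_drop] at hshort
  omega

lemma IsReducedWord.inv_apply_lt_of_exchanged (hl : IsReducedWord n w l)
    (h : Exchanged n l y z) (hyz : y < z) : w⁻¹ z < w⁻¹ y := by
  obtain ⟨t, htl, ht⟩ := h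
  have hunique : ∀ s, s < l.length → s ≠ t → ¬ Transposes n l s y z := fun s hsl hst hs => by
    rcases lt_or_gt_of_ne hst with h | h
    · exact hl.not_transposes_of_lt hs ht h htl
    · exact hl.not_transposes_of_lt ht hs h hsl
  have hbefore := inv_apply_lt_inv_apply_iff_of_forall_not_transposes hyz.ne (Nat.zero_le t)
    fun s _ hs => hunique s (by omega) hs.ne
  have hafter := inv_apply_lt_inv_apply_iff_of_forall_not_transposes hyz.ne' htl
    fun s hs _ hs' => hunique s (by omega) (by omega) hs'.symm
  rw [prefixProd_zero, inv_one, Perm.one_apply, Perm.one_apply] at hbefore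
  rw [prefixProd_length, hl.2.1, ht.inv_apply_left, ht.symm.inv_apply_left] at hafter
  exact hafter.mpr (hbefore.mpr hyz)

lemma IsReducedWord.strictAntiOn_inv (hl : IsReducedWord n w l) {s : Set (Fin n)}
    (hs : s.Pairwise (Exchanged n l)) : StrictAntiOn ⇑w⁻¹ s :=
  fun _ hy _ hz hyz => hl.inv_apply_lt_of_exchanged (hs hy hz hyz.ne) hyz

end Reduced

lemma Avoids321.card_le_two_of_strictAntiOn {n : ℕ} {w : Perm (Fin n)} (hw : Avoids321 n w)
    {s : Finset (Fin n)} (hs : StrictAntiOn ⇑w⁻¹ (s : Set (Fin n))) : s.card ≤ 2 := by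
  by_contra! h
  obtain ⟨t, hts, ht⟩ := Finset.exists_subset_card_eq h
  set e := t.orderEmbOfFin ht
  have he : ∀ i, e i ∈ (s : Set (Fin n)) := fun i => hts (t.orderEmbOfFin_mem ht i)
  have h01 : e 0 < e 1 := e.strictMono (by decide)
  have h12 : e 1 < e 2 := e.strictMono (by decide)
  exact hw ⟨w⁻¹ (e 2), w⁻¹ (e 1), w⁻¹ (e 0), hs (he 1) (he 2) h12, hs (he 0) (he 1) h01,
    by simp [h12], by simp [h01]⟩

section Main

variable {n : ℕ} {w : Perm (Fin n)} {l : List ℕ} {a b : ℕ} {q : Fin n}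

lemma Avoids321.exists_gen_apply_ne_between (hw : Avoids321 n w) (hl : IsReducedWord n w l)
    (hab : a < b) (hb : b < l.length) (hsame : l.getD a 0 = l.getD b 0)
    (hq : gen n (l.getD a 0) q ≠ q) : ∃ c, a < c ∧ c < b ∧ gen n (l.getD c 0) q ≠ q := by
  by_contra! hfix
  generalize hi : l.getD a 0 = i at hsame hq
  generalize hq' : gen n i q = q' at hq
  have hq'q : gen n i q' = q := by rw [← hq', ← Perm.mul_apply, gen_mul_self, Perm.one_apply]
  obtain ⟨x, hx⟩ : ∃ x, prefixProd n l (a + 1) q = x := ⟨_, rfl⟩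
  obtain ⟨u, hu⟩ : ∃ u, prefixProd n l (a + 1) q' = u := ⟨_, rfl⟩
  obtain ⟨v, hv⟩ : ∃ v, prefixProd n l b q' = v := ⟨_, rfl⟩
  have hxb : prefixProd n l b q = x := hx ▸
    prefixProd_apply_eq_of_forall_gen_apply_eq (by omega) fun t h _ => hfix t (by omega) ‹_›
  have htux : Transposes n l a u x := by
    have h := transposes_of_gen_apply_ne (t := a) (p := q) (by rw [hi, hq']; exact hq)
    have hua : prefixProd n l a q = u := by rw [← hu, prefixProd_succ_apply, hi, hq'q]
    have hxa : prefixProd n l a q' = x := by rw [← hx, prefixProd_succ_apply, hi, hq']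
    rwa [hi, hq', hua, hxa] at h
  have htxv : Transposes n l b x v := by
    have h := transposes_of_gen_apply_ne (t := b) (p := q) (by rw [← hsame, hq']; exact hq)
    rwa [← hsame, hq', hxb, hv] at h
  have hxu : x ≠ u := hx ▸ hu ▸ (prefixProd n l (a + 1)).injective.ne hq.symm
  have hxv : x ≠ v := hxb ▸ hv ▸ (prefixProd n l b).injective.ne hq.symm
  have huv : u ≠ v := fun h => hl.not_transposes_of_lt htux.symm (h ▸ htxv) hab hb
  have hu₀ : (prefixProd n l (a + 1))⁻¹ u = q' := by rw [← hu]; exact symm_apply_apply _ _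
  have hv₀ : (prefixProd n l b)⁻¹ v = q' := by rw [← hv]; exact symm_apply_apply _ _
  have hexch : Exchanged n l u v :=
    exchanged_of_inv_apply_eq (by omega) hb.le huv
      (fun t h₁ h₂ h => hq (by rw [← hq', ← h]; exact hfix t (by omega) h₂))
      (hu₀.trans hv₀.symm) (hu₀ ▸ gen_apply_ne_self_iff.mp (hq'q ▸ hq.symm)).2.2
  have hexu : Exchanged n l x u := ⟨a, by omega, htux.symm⟩
  have hexv : Exchanged n l x v := ⟨b, hb, htxv⟩
  have hanti := hl.strictAntiOn_inv (s := ({x, u, v} : Finset (Fin n))) <| by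
    simp [Set.pairwise_insert_of_symm, hxu, hxv, huv, hexu, hexv, hexch]
  have hcard := hw.card_le_two_of_strictAntiOn hanti
  rw [Finset.card_eq_three.mpr ⟨x, u, v, hxu, hxv, huv, rfl⟩] at hcard
  omega

lemma Avoids321.exists_ne_gen_apply_ne_between (hw : Avoids321 n w) (hl : IsReducedWord n w l)
    (hab : a < b) (hb : b < l.length) (hsame : l.getD a 0 = l.getD b 0)
    (hq : gen n (l.getD a 0) q ≠ q) :
    ∃ c, a < c ∧ c < b ∧ l.getD c 0 ≠ l.getD a 0 ∧ gen n (l.getD c 0) q ≠ q := by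
  induction b using Nat.strong_induction_on with
  | _ b ih =>
    obtain ⟨c, hac, hcb, hc⟩ := hw.exists_gen_apply_ne_between hl hab hb hsame hq
    by_cases hci : l.getD c 0 = l.getD a 0
    · obtain ⟨d, had, hdc, hd⟩ := ih c hcb hac (by omega) hci.symm
      exact ⟨d, had, hdc.trans hcb, hd⟩
    · exact ⟨c, hac, hcb, hci, hc⟩

end Main

/-- in any reduced word for a 321-avoiding `w`, any two occurrences of the
same generator `s_i` are separated by an occurrence of `s_{i-1}` and one of `s_{i+1}`. -/
theorem stmt1 (n : ℕ) (w : Equiv.Perm (Fin n)) (hw : Avoids321 n w)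
    (l : List ℕ) (hl : IsReducedWord n w l)
    (a b : ℕ) (hab : a < b) (hb : b < l.length) (hsame : l.getD a 0 = l.getD b 0) :
    (∃ c, a < c ∧ c < b ∧ l.getD c 0 = l.getD a 0 - 1) ∧
    (∃ c, a < c ∧ c < b ∧ l.getD c 0 = l.getD a 0 + 1) := by
  obtain ⟨hi₁, hin⟩ := hl.1 _ (List.getD_eq_getElem l 0 (hab.trans hb) ▸ List.getElem_mem _)
  constructor
  · obtain ⟨c, hac, hcb, hci, hc⟩ := hw.exists_ne_gen_apply_ne_between hl hab hb hsame
      (q := ⟨l.getD a 0 - 1, by omega⟩)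
      (gen_apply_ne_self_iff.mpr ⟨hi₁, hin, Or.inl (Nat.sub_add_cancel hi₁)⟩)
    have hmoves := gen_apply_ne_self_iff.mp hc
    exact ⟨c, hac, hcb, by simp only at hmoves; omega⟩
  · obtain ⟨c, hac, hcb, hci, hc⟩ := hw.exists_ne_gen_apply_ne_between hl hab hb hsame
      (q := ⟨l.getD a 0, hin⟩) (gen_apply_ne_self_iff.mpr ⟨hi₁, hin, Or.inr rfl⟩)
    have hmoves := gen_apply_ne_self_iff.mp hc
    exact ⟨c, hac, hcb, by simp only at hmoves; omega⟩
end

section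
/- Let w ∈ S_n and suppose some reduced word for w has the property that any two occurrences of the same generator s_i are separated by both an occurrence of s_{i-1} and an occurrence of s_{i+1}. Then w is 321-avoiding. -/
open Polynomial

private lemma gen_val {n v : ℕ} (h1 : 1 ≤ v) (h2 : v < n) (t : Fin n) :
    (gen n v t : ℕ) = if (t : ℕ) = v - 1 then v else if (t : ℕ) = v then v - 1 else t := by
  rw [gen, dif_pos ⟨h1, h2⟩, Equiv.swap_apply_def]
  simp only [Fin.ext_iff]
  split_ifs <;> simp_all <;> omega

private def sfx (n : ℕ) (l : List ℕ) (p : ℕ) : Equiv.Perm (Fin n) :=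
  wordProd n (l.drop p)

private lemma sfx_len (n : ℕ) (l : List ℕ) : sfx n l l.length = 1 := by
  simp [sfx, wordProd]

private lemma sfx_zero (n : ℕ) (l : List ℕ) : sfx n l 0 = wordProd n l := rfl

private lemma sfx_step (n : ℕ) (l : List ℕ) (p : ℕ) (hp : p < l.length) :
    sfx n l p = gen n (l.getD p 0) * sfx n l (p + 1) := by
  unfold sfx wordProd
  rw [List.drop_eq_getElem_cons hp, List.map_cons, List.prod_cons,
    List.getD_eq_getElem l 0 hp]

private lemma sfx_val (n : ℕ) (l : List ℕ) (hl : ∀ i ∈ l, 1 ≤ i ∧ i < n)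
    (p : ℕ) (hp : p < l.length) (x : Fin n) :
    (sfx n l p x : ℕ) =
      if (sfx n l (p+1) x : ℕ) = l.getD p 0 - 1 then l.getD p 0
      else if (sfx n l (p+1) x : ℕ) = l.getD p 0 then l.getD p 0 - 1
      else (sfx n l (p+1) x : ℕ) := by
  have hm : l.getD p 0 ∈ l := by
    rw [List.getD_eq_getElem l 0 hp]; exact List.getElem_mem _
  obtain ⟨h1, h2⟩ := hl _ hm
  rw [sfx_step n l p hp]
  exact gen_val h1 h2 _


/-- if some reduced word for `w` has every two occurrences of the same
generator `s_i` separated by both an `s_{i-1}` and an `s_{i+1}`, then `w` is 321-avoiding. -/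
theorem stmt2 (n : ℕ) (w : Equiv.Perm (Fin n)) (l : List ℕ) (hl : IsReducedWord n w l)
    (hsep : ∀ a b, a < b → b < l.length → l.getD a 0 = l.getD b 0 →
      (∃ c, a < c ∧ c < b ∧ l.getD c 0 = l.getD a 0 - 1) ∧
      (∃ c, a < c ∧ c < b ∧ l.getD c 0 = l.getD a 0 + 1)) :
    Avoids321 n w := by
  classical
  obtain ⟨hrange, hprod, -⟩ := hl
  rintro ⟨i, j, k, hij, hjk, hji, hkj⟩
  set L := l.length with hLdef
  have hrng : ∀ p, p < L → 1 ≤ l.getD p 0 ∧ l.getD p 0 < n := by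
    intro p hp
    exact hrange _ (by rw [List.getD_eq_getElem l 0 hp]; exact List.getElem_mem _)
  have hval : ∀ p, p < L → ∀ x : Fin n, (sfx n l p x : ℕ) =
      if (sfx n l (p+1) x : ℕ) = l.getD p 0 - 1 then l.getD p 0
      else if (sfx n l (p+1) x : ℕ) = l.getD p 0 then l.getD p 0 - 1
      else (sfx n l (p+1) x : ℕ) := fun p hp x => sfx_val n l hrange p hp x
  -- the flip lemma: when a pair's relative order flips, x moves up and y moves down
  have hflip : ∀ x y : Fin n, x ≠ y → ∀ p, p < L →
      sfx n l (p+1) x < sfx n l (p+1) y → ¬ (sfx n l p x < sfx n l p y) →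
      (sfx n l p x : ℕ) = (sfx n l (p+1) x : ℕ) + 1 ∧
      (sfx n l (p+1) y : ℕ) = (sfx n l p y : ℕ) + 1 := by
    intro x y hxy p hp hlt hge
    have h1 := hval p hp x
    have h2 := hval p hp y
    have hne : (sfx n l p x : ℕ) ≠ (sfx n l p y : ℕ) :=
      fun h => hxy ((sfx n l p).injective (Fin.ext h))
    have hk := hrng p hp
    rw [Fin.lt_def] at hlt hge
    split_ifs at h1 h2 <;> omega
  -- existence of a flip for each inverted pair
  have hexflip : ∀ x y : Fin n, x < y → w y < w x →
      ∃ p, p < L ∧ sfx n l (p+1) x < sfx n l (p+1) y ∧ ¬ (sfx n l p x < sfx n l p y) := by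
    intro x y h0 hw'
    have hPL : sfx n l L x < sfx n l L y := by
      rw [hLdef, sfx_len]; simpa using h0
    have hP0 : ¬ (sfx n l 0 x < sfx n l 0 y) := by
      rw [sfx_zero, hprod]; exact lt_asymm hw'
    set P : ℕ → Prop := fun p => ¬ (sfx n l p x < sfx n l p y) with hPdef
    set p := Nat.findGreatest P L with hpdef
    have hPp : P p := Nat.findGreatest_spec (Nat.zero_le L) hP0
    have hle : p ≤ L := Nat.findGreatest_le L
    have hpL : p < L := by
      rcases eq_or_lt_of_le hle with h | h
      · exact absurd hPL (h ▸ hPp)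
      · exact h
    refine ⟨p, hpL, ?_, hPp⟩
    have hgt : ¬ P (p + 1) :=
      Nat.findGreatest_is_greatest (by rw [← hpdef]; exact Nat.lt_succ_self p) (by omega)
    simpa [hPdef] using hgt
  -- consecutive moves of a wire go in the same direction
  have hcons : ∀ x : Fin n, ∀ a b, a < b → b < L →
      sfx n l a x ≠ sfx n l (a+1) x → sfx n l b x ≠ sfx n l (b+1) x →
      (∀ c, a < c → c < b → sfx n l c x = sfx n l (c+1) x) →
      ((sfx n l a x : ℕ) = (sfx n l (a+1) x : ℕ) + 1 ↔
       (sfx n l b x : ℕ) = (sfx n l (b+1) x : ℕ) + 1) := by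
    intro x a b hab hbL hma hmb hnm
    have hconst : ∀ c, a + 1 ≤ c → c ≤ b → sfx n l c x = sfx n l (a+1) x := by
      intro c h1 h2
      induction c, h1 using Nat.le_induction with
      | base => rfl
      | succ c hc ih =>
        rw [← hnm c (by omega) (by omega)]
        exact ih (by omega)
    have hbv : (sfx n l b x : ℕ) = (sfx n l (a+1) x : ℕ) := by
      rw [hconst b (by omega) le_rfl]
    have h1 := hval a (by omega) x
    have h2 := hval b hbL x
    have ha1 := hrng a (by omega)
    have hb1 := hrng b hbL
    have hma' : (sfx n l a x : ℕ) ≠ (sfx n l (a+1) x : ℕ) :=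
      fun h => hma (Fin.ext h)
    have hmb' : (sfx n l b x : ℕ) ≠ (sfx n l (b+1) x : ℕ) :=
      fun h => hmb (Fin.ext h)
    have dira : ((sfx n l (a+1) x : ℕ) = l.getD a 0 - 1 ∧ (sfx n l a x : ℕ) = l.getD a 0)
        ∨ ((sfx n l (a+1) x : ℕ) = l.getD a 0 ∧ (sfx n l a x : ℕ) = l.getD a 0 - 1) := by
      split_ifs at h1 <;> omega
    have dirb : ((sfx n l (b+1) x : ℕ) = l.getD b 0 - 1 ∧ (sfx n l b x : ℕ) = l.getD b 0)
        ∨ ((sfx n l (b+1) x : ℕ) = l.getD b 0 ∧ (sfx n l b x : ℕ) = l.getD b 0 - 1) := by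
      split_ifs at h2 <;> omega
    rcases dira with ⟨e1, e2⟩ | ⟨e1, e2⟩ <;> rcases dirb with ⟨f1, f2⟩ | ⟨f1, f2⟩
    · -- up at b (earlier), up at a (later): consistent
      exact iff_of_true (by omega) (by omega)
    · -- down at b, up at a: bad turn (level h = getD b 0 - 1 = getD a 0 - 1)
      exfalso
      have hletter : l.getD a 0 = l.getD b 0 := by omega
      obtain ⟨⟨c, hc1, hc2, hc3⟩, -⟩ := hsep a b hab hbL hletter
      have h3 := hval c (by omega) x
      have hcx : (sfx n l (c+1) x : ℕ) = (sfx n l (a+1) x : ℕ) := by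
        rw [hconst (c+1) (by omega) (by omega)]
      have hceq : (sfx n l c x : ℕ) = (sfx n l (c+1) x : ℕ) := by
        rw [hnm c hc1 hc2]
      have hcr := hrng c (by omega)
      split_ifs at h3 <;> omega
    · -- up at b, down at a: bad turn (level h = getD a 0 = getD b 0)
      exfalso
      have hletter : l.getD a 0 = l.getD b 0 := by omega
      obtain ⟨-, ⟨c, hc1, hc2, hc3⟩⟩ := hsep a b hab hbL hletter
      have h3 := hval c (by omega) x
      have hcx : (sfx n l (c+1) x : ℕ) = (sfx n l (a+1) x : ℕ) := by
        rw [hconst (c+1) (by omega) (by omega)]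
      have hceq : (sfx n l c x : ℕ) = (sfx n l (c+1) x : ℕ) := by
        rw [hnm c hc1 hc2]
      have hcr := hrng c (by omega)
      split_ifs at h3 <;> omega
    · -- down at b, down at a: consistent
      exact iff_of_false (by omega) (by omega)
  -- all moves of a wire go in the same direction
  have hdir : ∀ d (x : Fin n), ∀ a b, a < b → b < L → b - a ≤ d →
      sfx n l a x ≠ sfx n l (a+1) x → sfx n l b x ≠ sfx n l (b+1) x →
      ((sfx n l a x : ℕ) = (sfx n l (a+1) x : ℕ) + 1 ↔
       (sfx n l b x : ℕ) = (sfx n l (b+1) x : ℕ) + 1) := by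
    intro d
    induction d with
    | zero =>
      intro x a b hab _ hd _ _
      exact absurd hd (by omega)
    | succ d ih =>
      intro x a b hab hbL hd hma hmb
      by_cases hex : ∃ c, a < c ∧ c < b ∧ sfx n l c x ≠ sfx n l (c+1) x
      · obtain ⟨c, hc1, hc2, hc3⟩ := hex
        exact (ih x a c hc1 (by omega) (by omega) hma hc3).trans
          (ih x c b hc2 hbL (by omega) hc3 hmb)
      · push_neg at hex
        exact hcons x a b hab hbL hma hmb hex
  -- assemble: wire j moves up at the (j,k) flip and down at the (i,j) flip
  obtain ⟨p1, hp1, h1a, h1b⟩ := hexflip j k hjk hkj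
  obtain ⟨p2, hp2, h2a, h2b⟩ := hexflip i j hij hji
  have hu1 := (hflip j k (ne_of_lt hjk) p1 hp1 h1a h1b).1
  have hd2 := (hflip i j (ne_of_lt hij) p2 hp2 h2a h2b).2
  have hm1 : sfx n l p1 j ≠ sfx n l (p1+1) j := by
    intro h; rw [h] at hu1; omega
  have hm2 : sfx n l p2 j ≠ sfx n l (p2+1) j := by
    intro h; rw [h] at hd2; omega
  rcases Nat.lt_trichotomy p1 p2 with h | h | h
  · have hiff := hdir (p2 - p1) j p1 p2 h hp2 le_rfl hm1 hm2
    have := hiff.mp hu1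
    omega
  · rw [h] at hu1
    omega
  · have hiff := hdir (p1 - p2) j p2 p1 h hp1 le_rfl hm2 hm1
    have := hiff.mpr hu1
    omega
end

section
/- The number of 321-avoiding permutations in S_n equals the n-th Catalan number C_n = (1/(n+1))·binom(2n, n). -/
open Polynomial

/-!
A permutation `w` is determined by its excedance set `A = {i | i < w i}`, the set `B = w '' A`
of excedance values, and the two bijections `A → B`, `Aᶜ → Bᶜ` it induces. If `w` avoids `321`
both bijections are increasing: a descent among excedances (or among non-excedances) leaves too
few large (small) values for the positions after (before) it, and the pigeonhole principle
produces the third entry of a `321` pattern. Conversely, filling `A → B` and `Aᶜ → Bᶜ`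
increasingly always gives a `321`-avoiding permutation, since two of any three entries lie on
the same side. The pairs `(A, B)` that occur are exactly those with `#A = #B` and
`#{b ∈ B | b ≤ t} ≤ #{a ∈ A | a < t}` for all `t`. Writing, for each position `i`, a step that
records `i ∈ B` followed by a step that records `i ∈ A` turns these conditions into the Dyck
condition on a word of semilength `n`, so there are `catalan n` such pairs.
-/

open Finset

lemma Equiv.subtypeCongr_apply_of_pos {α : Type*} {p q : α → Prop} [DecidablePred p]
    [DecidablePred q] (e : {x // p x} ≃ {x // q x}) (f : {x // ¬p x} ≃ {x // ¬q x}) {x : α}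
    (hx : p x) : e.subtypeCongr f x = e ⟨x, hx⟩ := by
  simp [Equiv.subtypeCongr, Equiv.sumCompl_symm_apply_of_pos hx]

lemma Equiv.subtypeCongr_apply_of_neg {α : Type*} {p q : α → Prop} [DecidablePred p]
    [DecidablePred q] (e : {x // p x} ≃ {x // q x}) (f : {x // ¬p x} ≃ {x // ¬q x}) {x : α}
    (hx : ¬p x) : e.subtypeCongr f x = f ⟨x, hx⟩ := by
  simp [Equiv.subtypeCongr, Equiv.sumCompl_symm_apply_of_neg hx]

section FiniteLinearOrder

variable {β γ : Type*} [LinearOrder β] [Fintype β] [LinearOrder γ] [Fintype γ]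

noncomputable def Fintype.orderIsoOfCardEq (h : Fintype.card β = Fintype.card γ) : β ≃o γ :=
  (Fintype.orderIsoFinOfCardEq β h).symm.trans (Fintype.orderIsoFinOfCardEq γ rfl)

lemma OrderIso.coe_eq_of_strictMono (e : β ≃o γ) {f : β → γ} (hf : StrictMono f) : ⇑e = f := by
  have hsurj : Function.Surjective f :=
    ((Fintype.bijective_iff_injective_and_card f).2 ⟨hf.injective, Fintype.card_congr e⟩).2
  rw [Subsingleton.elim e (hf.orderIsoOfSurjective f hsurj), StrictMono.coe_orderIsoOfSurjective]

end FiniteLinearOrder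

section Finset

variable {α : Type*}

lemma Finset.card_compl_eq_card_compl [Fintype α] [DecidableEq α] {A B : Finset α}
    (h : #A = #B) : #Aᶜ = #Bᶜ := by
  rw [card_compl, card_compl, h]

lemma Finset.card_filter_add_card_filter_compl [Fintype α] [DecidableEq α] (S : Finset α)
    (p : α → Prop) [DecidablePred p] : #{y ∈ S | p y} + #{y ∈ Sᶜ | p y} = #{y | p y} := by
  rw [← card_union_of_disjoint (disjoint_filter_filter disjoint_compl_right), ← filter_union,
    union_compl]

variable [LinearOrder α]

noncomputable def Finset.orderIsoOfCardEq [Fintype α] (A B : Finset α) (h : #A = #B) :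
    A ≃o B :=
  Fintype.orderIsoOfCardEq (by simpa using h)

lemma Finset.orderIso_apply_eq_of_strictMonoOn {S T : Finset α} (e : S ≃o T) {f : α → α}
    (hf : StrictMonoOn f S) (hST : ∀ x ∈ S, f x ∈ T) (x : S) : (e x : α) = f x := by
  rw [e.coe_eq_of_strictMono (f := fun x => ⟨f x, hST x x.2⟩) fun x y hxy => hf x.2 y.2 hxy]

lemma Finset.card_filter_lt_orderIso {S T : Finset α} (e : S ≃o T) (x : S) :
    #{y ∈ T | y < (e x : α)} = #{y ∈ S | y < (x : α)} := by
  symm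
  refine card_bij (fun y hy => (e ⟨y, (mem_filter.1 hy).1⟩ : α)) ?_ ?_ ?_
  · intro y hy
    obtain ⟨hyS, hyx⟩ := mem_filter.1 hy
    exact mem_filter.2 ⟨(e _).2, e.lt_iff_lt.2 (Subtype.mk_lt_mk.2 hyx)⟩
  · intro y hy z hz hyz
    simpa using e.injective (Subtype.ext hyz)
  · intro y hy
    obtain ⟨hyT, hyx⟩ := mem_filter.1 hy
    refine ⟨e.symm ⟨y, hyT⟩, mem_filter.2 ⟨(e.symm _).2, ?_⟩, by simp⟩
    simpa using e.symm.lt_iff_lt.2 (show ⟨y, hyT⟩ < e x from hyx)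

lemma Finset.card_filter_lt_lt_card_filter_le {S : Finset α} {x : α} (hx : x ∈ S) :
    #{y ∈ S | y < x} < #{y ∈ S | y ≤ x} :=
  card_lt_card <| (ssubset_iff_of_subset (monotone_filter_right _ fun _ _ => le_of_lt)).2
    ⟨x, by simp [hx]⟩

end Finset

section Perm

variable {α : Type*} [LinearOrder α]

lemma Equiv.Perm.exists_gt_apply_lt [LocallyFiniteOrderTop α] (w : Equiv.Perm α) {i j : α}
    (hij : i < j) (hj : j ≤ w j) (hji : w j < w i) : ∃ k, j < k ∧ w k < w j := by
  by_contra! h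
  have hmaps : ∀ k ∈ insert i (Ioi j), w k ∈ Ioi (w j) := by
    intro k hk
    rcases mem_insert.1 hk with rfl | hk
    · exact mem_Ioi.2 hji
    · exact mem_Ioi.2 <| (h k (mem_Ioi.1 hk)).lt_of_ne fun e => (mem_Ioi.1 hk).ne (w.injective e)
  have := card_le_card_of_injOn w hmaps w.injective.injOn
  rw [card_insert_of_notMem (by simpa using hij.le)] at this
  have := card_le_card (Ioi_subset_Ioi hj)
  omega

lemma Equiv.Perm.exists_lt_lt_apply [LocallyFiniteOrderBot α] (w : Equiv.Perm α) {i j : α}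
    (hij : i < j) (hi : w i ≤ i) (hji : w j < w i) : ∃ k, k < i ∧ w i < w k :=
  Equiv.Perm.exists_gt_apply_lt (α := αᵒᵈ) w hij hi hji

def IsExcedancePair (A B : Finset α) : Prop :=
  #A = #B ∧ ∀ t, #{b ∈ B | b ≤ t} ≤ #{a ∈ A | a < t}

variable [Fintype α]

/-- The permutation mapping `A` increasingly onto `B` and `Aᶜ` increasingly onto `Bᶜ`. -/
noncomputable def fill (A B : Finset α) (h : #A = #B) : Equiv.Perm α :=
  (A.orderIsoOfCardEq B h).toEquiv.subtypeCongr <|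
    (Equiv.subtypeEquivRight fun _ => mem_compl).symm.trans <|
      (Aᶜ.orderIsoOfCardEq Bᶜ (card_compl_eq_card_compl h)).toEquiv.trans
        (Equiv.subtypeEquivRight fun _ => mem_compl)

variable {A B : Finset α} {h : #A = #B} {i : α}

lemma fill_apply_of_mem (hi : i ∈ A) : fill A B h i = A.orderIsoOfCardEq B h ⟨i, hi⟩ :=
  Equiv.subtypeCongr_apply_of_pos _ _ hi

lemma fill_apply_of_notMem (hi : i ∉ A) :
    fill A B h i = Aᶜ.orderIsoOfCardEq Bᶜ (card_compl_eq_card_compl h) ⟨i, mem_compl.2 hi⟩ :=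
  Equiv.subtypeCongr_apply_of_neg _ _ hi

lemma fill_mem_iff : fill A B h i ∈ B ↔ i ∈ A := by
  by_cases hi : i ∈ A
  · simp [fill_apply_of_mem hi, hi]
  · have := (Aᶜ.orderIsoOfCardEq Bᶜ (card_compl_eq_card_compl h) ⟨i, mem_compl.2 hi⟩).2
    rw [fill_apply_of_notMem hi]
    exact iff_of_false (mem_compl.1 this) hi

lemma strictMonoOn_fill (A B : Finset α) (h : #A = #B) : StrictMonoOn (fill A B h) A :=
  fun x hx y hy hxy => by
    rw [fill_apply_of_mem hx, fill_apply_of_mem hy]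
    exact (A.orderIsoOfCardEq B h).strictMono (Subtype.mk_lt_mk.2 hxy)

lemma strictMonoOn_fill_compl (A B : Finset α) (h : #A = #B) :
    StrictMonoOn (fill A B h) (A : Set α)ᶜ := fun x hx y hy hxy => by
  rw [fill_apply_of_notMem hx, fill_apply_of_notMem hy]
  exact (Aᶜ.orderIsoOfCardEq Bᶜ _).strictMono (Subtype.mk_lt_mk.2 hxy)

lemma image_fill (A B : Finset α) (h : #A = #B) : A.image (fill A B h) = B :=
  eq_of_subset_of_card_le (fun _ hx => by
      obtain ⟨a, ha, rfl⟩ := mem_image.1 hx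
      exact fill_mem_iff.2 ha)
    (by rw [card_image_of_injective _ (fill A B h).injective, h])

lemma fill_image_eq (w : Equiv.Perm α) (A : Finset α) (h : #A = #(A.image w))
    (hA : StrictMonoOn w A) (hAc : StrictMonoOn w (A : Set α)ᶜ) : fill A (A.image w) h = w := by
  ext i
  by_cases hi : i ∈ A
  · rw [fill_apply_of_mem hi,
      orderIso_apply_eq_of_strictMonoOn _ hA fun x hx => mem_image_of_mem w hx]
  · rw [fill_apply_of_notMem hi, orderIso_apply_eq_of_strictMonoOn _ (by simpa using hAc)
      fun x hx => ?_]
    simp only [mem_compl, mem_image, not_exists, not_and] at hx ⊢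
    exact fun y hy hyx => hx (w.injective hyx ▸ hy)

def excedances (w : Equiv.Perm α) : Finset α := {i | i < w i}

@[simp]
lemma mem_excedances {w : Equiv.Perm α} : i ∈ excedances w ↔ i < w i := by
  simp [excedances]

lemma isExcedancePair_excedances (w : Equiv.Perm α) :
    IsExcedancePair (excedances w) ((excedances w).image w) := by
  refine ⟨(card_image_of_injective _ w.injective).symm, fun t => ?_⟩
  refine card_le_card_of_injOn w.symm (fun b hb => ?_) w.symm.injective.injOn
  obtain ⟨hbB, hbt⟩ := mem_filter.1 hb
  obtain ⟨a, ha, rfl⟩ := mem_image.1 hbB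
  simpa [mem_excedances.1 ha] using (mem_excedances.1 ha).trans_le hbt

/- If `fill i ≤ i`, the elements of `B` up to `fill i` are the images of those of `A` up to `i`:
one more than the elements of `A` below `fill i`, against the domination condition at `fill i`. -/
lemma lt_fill_of_mem (hAB : IsExcedancePair A B) (hi : i ∈ A) : i < fill A B hAB.1 i := by
  by_contra! hle
  have hmatch : #{b ∈ B | b < fill A B hAB.1 i} = #{a ∈ A | a < i} := by
    rw [fill_apply_of_mem hi]
    exact card_filter_lt_orderIso _ _
  have hlt := card_filter_lt_lt_card_filter_le (fill_mem_iff (h := hAB.1) |>.2 hi)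
  have hmono : #{a ∈ A | a < fill A B hAB.1 i} ≤ #{a ∈ A | a < i} :=
    card_le_card (monotone_filter_right _ fun _ _ ha => ha.trans_le hle)
  have := hAB.2 (fill A B hAB.1 i)
  omega

/- If `i < fill i`, the elements of `Bᶜ` up to `i` come from elements of `Aᶜ` below `i`, so `Bᶜ`
has fewer elements up to `i` than `Aᶜ`, hence `B` more than `A`, against domination at `i`. -/
lemma fill_le_of_notMem (hAB : IsExcedancePair A B) (hi : i ∉ A) : fill A B hAB.1 i ≤ i := by
  by_contra! hlt
  have hmatch : #{b ∈ Bᶜ | b < fill A B hAB.1 i} = #{a ∈ Aᶜ | a < i} := by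
    rw [fill_apply_of_notMem hi]
    exact card_filter_lt_orderIso _ _
  have hBc : #{b ∈ Bᶜ | b ≤ i} ≤ #{b ∈ Bᶜ | b < fill A B hAB.1 i} :=
    card_le_card (monotone_filter_right _ fun _ _ hb => hb.trans_lt hlt)
  have hAc := card_filter_lt_lt_card_filter_le (mem_compl.2 hi)
  have hA : #{a ∈ A | a < i} ≤ #{a ∈ A | a ≤ i} :=
    card_le_card (monotone_filter_right _ fun _ _ => le_of_lt)
  have := card_filter_add_card_filter_compl A (· ≤ i)
  have := card_filter_add_card_filter_compl B (· ≤ i)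
  have := hAB.2 i
  omega

lemma excedances_fill (hAB : IsExcedancePair A B) : excedances (fill A B hAB.1) = A := by
  ext i
  rw [mem_excedances]
  exact ⟨fun hlt => by_contra fun hi => (fill_le_of_notMem hAB hi).not_gt hlt,
    lt_fill_of_mem hAB⟩

end Perm

section Avoids321

variable {n : ℕ} {w : Equiv.Perm (Fin n)}

lemma avoids321_of_strictMonoOn (s : Set (Fin n)) (hs : StrictMonoOn w s)
    (hsc : StrictMonoOn w sᶜ) : Avoids321 n w := by
  have sides : ∀ x y, x < y → w y < w x → (x ∈ s ↔ y ∉ s) := fun x y hxy hyx =>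
    ⟨fun hx hy => (hs hx hy hxy).not_gt hyx,
      fun hy => by_contra fun hx => (hsc hx hy hxy).not_gt hyx⟩
  rintro ⟨i, j, k, hij, hjk, hji, hkj⟩
  have := sides i j hij hji
  have := sides j k hjk hkj
  have := sides i k (hij.trans hjk) (hkj.trans hji)
  tauto

lemma Avoids321.strictMonoOn_excedances (hw : Avoids321 n w) :
    StrictMonoOn w (excedances w) := by
  intro i hi j hj hij
  rw [mem_coe, mem_excedances] at hi hj
  by_contra! hle
  have hji : w j < w i := hle.lt_of_ne fun e => hij.ne (w.injective e).symm
  obtain ⟨k, hjk, hkj⟩ := w.exists_gt_apply_lt hij hj.le hji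
  exact hw ⟨i, j, k, hij, hjk, hji, hkj⟩

lemma Avoids321.strictMonoOn_compl_excedances (hw : Avoids321 n w) :
    StrictMonoOn w (excedances w : Set (Fin n))ᶜ := by
  intro i hi j hj hij
  simp only [Set.mem_compl_iff, mem_coe, mem_excedances, not_lt] at hi hj
  by_contra! hle
  have hji : w j < w i := hle.lt_of_ne fun e => hij.ne (w.injective e).symm
  obtain ⟨k, hki, hik⟩ := w.exists_lt_lt_apply hij hi hji
  exact hw ⟨k, i, j, hki, hij, hik, hji⟩

variable (n) in
noncomputable def avoids321EquivExcedancePair :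
    {w : Equiv.Perm (Fin n) // Avoids321 n w} ≃
      {AB : Finset (Fin n) × Finset (Fin n) // IsExcedancePair AB.1 AB.2} where
  toFun w := ⟨(excedances w.1, (excedances w.1).image w.1), isExcedancePair_excedances w.1⟩
  invFun AB := ⟨fill AB.1.1 AB.1.2 AB.2.1,
    avoids321_of_strictMonoOn _ (strictMonoOn_fill ..) (strictMonoOn_fill_compl ..)⟩
  left_inv w := Subtype.ext <|
    fill_image_eq w.1 _ _ w.2.strictMonoOn_excedances w.2.strictMonoOn_compl_excedances
  right_inv := by
    rintro ⟨⟨A, B⟩, hAB⟩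
    simp only [excedances_fill hAB, image_fill]

end Avoids321

section DyckWord

open DyckStep

variable {n : ℕ} {A B : Finset (Fin n)}

def pairWord (A B : Finset (Fin n)) : List DyckStep :=
  List.ofFn fun j : Fin (2 * n) =>
    if j.val % 2 = 0 then if (⟨j / 2, by omega⟩ : Fin n) ∈ B then D else U
    else if (⟨j / 2, by omega⟩ : Fin n) ∈ A then U else D

lemma length_pairWord : (pairWord A B).length = 2 * n := List.length_ofFn

lemma getElem?_pairWord_two_mul (i : Fin n) :
    (pairWord A B)[2 * i.val]? = some (if i ∈ B then D else U) := by
  simp [pairWord, show 2 * i.val < 2 * n by omega]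

lemma getElem?_pairWord_two_mul_add_one (i : Fin n) :
    (pairWord A B)[2 * i.val + 1]? = some (if i ∈ A then U else D) := by
  simp [pairWord, show 2 * i.val + 1 < 2 * n by omega, Nat.add_mod,
    show (2 * i.val + 1) / 2 = i by omega]

lemma take_pairWord_two_mul_add_one (i : Fin n) :
    (pairWord A B).take (2 * i + 1) = (pairWord A B).take (2 * i) ++ [if i ∈ B then D else U] := by
  rw [List.take_add_one, getElem?_pairWord_two_mul]
  rfl

lemma take_pairWord_two_mul_add_two (i : Fin n) :
    (pairWord A B).take (2 * i + 2) =
      (pairWord A B).take (2 * i + 1) ++ [if i ∈ A then U else D] := by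
  rw [List.take_add_one, getElem?_pairWord_two_mul_add_one]
  rfl

lemma card_filter_val_lt_succ (S : Finset (Fin n)) (i : Fin n) :
    #{x ∈ S | x.val < i.val + 1} = #{x ∈ S | x.val < i.val} + if i ∈ S then 1 else 0 := by
  split_ifs with hi
  · have : {x ∈ S | x.val < i.val + 1} = insert i {x ∈ S | x.val < i.val} := by
      ext x
      simp only [mem_filter, mem_insert, Fin.ext_iff]
      constructor
      · rintro ⟨hx, hlt⟩
        exact (Nat.lt_succ_iff_lt_or_eq.1 hlt).symm.imp_right fun h => ⟨hx, h⟩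
      · rintro (h | ⟨hx, hlt⟩)
        · exact ⟨by rwa [Fin.ext h], by omega⟩
        · exact ⟨hx, by omega⟩
    rw [this, card_insert_of_notMem (by simp)]
  · refine congrArg card (filter_congr fun x hx => ?_)
    have : x ≠ i := by rintro rfl; exact hi hx
    have := Fin.val_ne_of_ne this
    omega

lemma count_take_pairWord (q : ℕ) (hq : q ≤ n) :
    ((pairWord A B).take (2 * q)).count U + #{b ∈ B | b.val < q} = q + #{a ∈ A | a.val < q} ∧
    ((pairWord A B).take (2 * q)).count D + #{a ∈ A | a.val < q} = q + #{b ∈ B | b.val < q} := by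
  induction q with
  | zero => simp
  | succ q ih =>
    obtain ⟨ihU, ihD⟩ := ih (by omega)
    have hA := card_filter_val_lt_succ A ⟨q, hq⟩
    have hB := card_filter_val_lt_succ B ⟨q, hq⟩
    rw [mul_add, mul_one, take_pairWord_two_mul_add_two ⟨q, hq⟩,
      take_pairWord_two_mul_add_one ⟨q, hq⟩]
    simp only at hA hB ⊢
    split_ifs at hA hB ⊢ <;>
      simp only [List.count_append, List.count_singleton, beq_iff_eq, reduceCtorEq, if_true,
        if_false] <;> omega

lemma count_pairWord :
    (pairWord A B).count U + #B = n + #A ∧ (pairWord A B).count D + #A = n + #B := by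
  have := count_take_pairWord (A := A) (B := B) n le_rfl
  rwa [List.take_of_length_le length_pairWord.le, filter_true_of_mem fun x _ => x.isLt,
    filter_true_of_mem fun x _ => x.isLt] at this

lemma count_U_eq_count_D_pairWord_iff :
    (pairWord A B).count U = (pairWord A B).count D ↔ #A = #B := by
  have := count_pairWord (A := A) (B := B)
  omega

lemma count_D_le_count_U_take_pairWord_iff :
    (∀ m, ((pairWord A B).take m).count D ≤ ((pairWord A B).take m).count U) ↔
      ∀ t : Fin n, #{b ∈ B | b ≤ t} ≤ #{a ∈ A | a < t} := by
  have even : ∀ q ≤ n, ((pairWord A B).take (2 * q)).count D ≤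
      ((pairWord A B).take (2 * q)).count U ↔ #{b ∈ B | b.val < q} ≤ #{a ∈ A | a.val < q} := by
    intro q hq
    have := count_take_pairWord (A := A) (B := B) q hq
    omega
  have odd : ∀ t : Fin n, ((pairWord A B).take (2 * t + 1)).count D ≤
      ((pairWord A B).take (2 * t + 1)).count U ↔ #{b ∈ B | b ≤ t} ≤ #{a ∈ A | a < t} := by
    intro t
    have := count_take_pairWord (A := A) (B := B) t t.isLt.le
    have hB := card_filter_val_lt_succ B t
    have hle : #{b ∈ B | b ≤ t} = #{b ∈ B | b.val < t.val + 1} :=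
      congrArg card (filter_congr fun _ _ => Nat.lt_succ_iff.symm)
    rw [take_pairWord_two_mul_add_one, hle]
    change _ ↔ _ ≤ #{a ∈ A | a.val < t.val}
    split_ifs at hB ⊢ <;>
      simp only [List.count_append, List.count_singleton, beq_iff_eq, reduceCtorEq, if_true,
        if_false] <;> omega
  refine ⟨fun h t => (odd t).1 (h _), fun h m => ?_⟩
  have hprefix : ∀ q ≤ n, #{b ∈ B | b.val < q} ≤ #{a ∈ A | a.val < q} := by
    rintro (_ | q) hq
    · simp
    · calc #{b ∈ B | b.val < q + 1} = #{b ∈ B | b ≤ (⟨q, hq⟩ : Fin n)} :=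
            congrArg card (filter_congr fun _ _ => Nat.lt_succ_iff)
        _ ≤ #{a ∈ A | a < (⟨q, hq⟩ : Fin n)} := h _
        _ ≤ #{a ∈ A | a.val < q + 1} :=
            card_le_card (monotone_filter_right _ fun _ _ ha => Nat.lt_succ_of_lt ha)
  rcases lt_or_ge m (2 * n) with hm | hm
  · obtain ⟨q, rfl | rfl⟩ : ∃ q, m = 2 * q ∨ m = 2 * q + 1 := ⟨m / 2, by omega⟩
    · exact (even q (by omega)).2 (hprefix q (by omega))
    · exact (odd ⟨q, by omega⟩).2 (h _)
  · rw [List.take_of_length_le (by rw [length_pairWord]; omega)]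
    have := (even n le_rfl).2 (hprefix n le_rfl)
    rwa [List.take_of_length_le length_pairWord.le] at this

lemma exists_pairWord_eq {l : List DyckStep} (hl : l.length = 2 * n) :
    ∃ A B : Finset (Fin n), pairWord A B = l := by
  refine ⟨({i | l[2 * i.val + 1]? = some U} : Finset (Fin n)),
    ({i | l[2 * i.val]? = some D} : Finset (Fin n)), List.ext_getElem? fun j => ?_⟩
  rcases lt_or_ge j (2 * n) with hj | hj
  · obtain ⟨i, rfl | rfl⟩ : ∃ i : Fin n, j = 2 * i ∨ j = 2 * i + 1 :=
      ⟨⟨j / 2, by omega⟩, by simp only; omega⟩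
    · have hi : 2 * i.val < l.length := by omega
      rw [getElem?_pairWord_two_mul, List.getElem?_eq_getElem hi]
      rcases DyckStep.dichotomy l[2 * i.val] with h | h <;>
        simp [h, List.getElem?_eq_getElem hi]
    · have hi : 2 * i.val + 1 < l.length := by omega
      rw [getElem?_pairWord_two_mul_add_one, List.getElem?_eq_getElem hi]
      rcases DyckStep.dichotomy l[2 * i.val + 1] with h | h <;>
        simp [h, List.getElem?_eq_getElem hi]
  · rw [List.getElem?_eq_none (by rw [length_pairWord]; omega), List.getElem?_eq_none (by omega)]

lemma pairWord_injective :
    Function.Injective fun AB : Finset (Fin n) × Finset (Fin n) => pairWord AB.1 AB.2 := by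
  rintro ⟨A, B⟩ ⟨A', B'⟩ (h : pairWord A B = pairWord A' B')
  have hA (i : Fin n) : i ∈ A ↔ i ∈ A' := by
    have := getElem?_pairWord_two_mul_add_one (A := A) (B := B) i
    rw [h, getElem?_pairWord_two_mul_add_one] at this
    by_cases i ∈ A <;> by_cases i ∈ A' <;> simp_all
  have hB (i : Fin n) : i ∈ B ↔ i ∈ B' := by
    have := getElem?_pairWord_two_mul (A := A) (B := B) i
    rw [h, getElem?_pairWord_two_mul] at this
    by_cases i ∈ B <;> by_cases i ∈ B' <;> simp_all
  rw [Prod.mk.injEq]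
  exact ⟨ext hA, ext hB⟩

variable (n) in
def excedancePairToDyckWord
    (AB : {AB : Finset (Fin n) × Finset (Fin n) // IsExcedancePair AB.1 AB.2}) :
    {p : DyckWord // p.semilength = n} :=
  ⟨⟨pairWord AB.1.1 AB.1.2, count_U_eq_count_D_pairWord_iff.2 AB.2.1,
    count_D_le_count_U_take_pairWord_iff.2 AB.2.2⟩, by
      have := count_pairWord (A := AB.1.1) (B := AB.1.2)
      have := AB.2.1
      simp only [DyckWord.semilength]
      omega⟩

lemma excedancePairToDyckWord_bijective : Function.Bijective (excedancePairToDyckWord n) := by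
  refine ⟨fun AB AB' h => Subtype.ext (pairWord_injective ?_), fun p => ?_⟩
  · exact congrArg (fun p : {p : DyckWord // p.semilength = n} => p.1.toList) h
  obtain ⟨p, hp⟩ := p
  obtain ⟨A, B, hAB⟩ := exists_pairWord_eq (n := n) (l := p.toList)
    (by rw [← p.two_mul_semilength_eq_length, hp])
  refine ⟨⟨(A, B), count_U_eq_count_D_pairWord_iff.1 ?_,
    count_D_le_count_U_take_pairWord_iff.1 ?_⟩, Subtype.ext (DyckWord.ext hAB)⟩
  · rw [hAB]
    exact p.count_U_eq_count_D
  · rw [hAB]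
    exact p.count_D_le_count_U

lemma card_excedancePair (n : ℕ) :
    Nat.card {AB : Finset (Fin n) × Finset (Fin n) // IsExcedancePair AB.1 AB.2} = catalan n := by
  rw [Nat.card_eq_of_bijective _ excedancePairToDyckWord_bijective, Nat.card_eq_fintype_card,
    DyckWord.card_dyckWord_semilength_eq_catalan]

end DyckWord

open scoped Classical in
/-- the number of 321-avoiding permutations in `S_n` is the `n`-th Catalan
number `C_n = (1/(n+1))·binom(2n, n)`. -/
theorem stmt15 (n : ℕ) :
    (Finset.univ.filter (fun w : Equiv.Perm (Fin n) => Avoids321 n w)).card = catalan n ∧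
    (n + 1) * (Finset.univ.filter (fun w : Equiv.Perm (Fin n) => Avoids321 n w)).card
      = (2 * n).choose n := by
  have hcard : #{w : Equiv.Perm (Fin n) | Avoids321 n w} = catalan n := by
    rw [← Fintype.card_subtype, ← Nat.card_eq_fintype_card,
      Nat.card_congr (avoids321EquivExcedancePair n), card_excedancePair]
  exact ⟨hcard, hcard ▸ succ_mul_catalan_eq_centralBinom n⟩
end
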